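/- Let b₁, b₂ > 0 and g_D, g_N ∈ ℝ. Then there exist unique constants α₁, β₁, α₂, β₂ ∈ ℝ such that the piecewise function u defined by u(x) = α₁·exp(√b₁·x) + β₁·exp(-√b₁·x) for x ∈ [0, 1/2) and u(x) = α₂·exp(√b₂·x) + β₂·exp(-√b₂·x) for x ∈ (1/2, 1] satisfies: the homogeneous boundary conditions u(0) = 0 and u(1) = 0, the jump condition lim_{x→1/2⁺} u(x) - lim_{x→1/2⁻} u(x) = g_D, and the derivative jump condition lim_{x→1/2⁺} u'(x) - lim_{x→1/2⁻} u'(x) = g_N. Consequently u is the unique piecewise solution of -u'' + b_i u = 0 on each subinterval satisfying these interface and boundary conditions. -/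

import Mathlib

/-!
On each side of the interface the solutions of `-u'' + k²u = 0` are `α e^{kx} + β e^{-kx}`, and
the boundary and jump conditions are a linear map of the four coefficients to `ℝ⁴`, so it suffices
to show that this map is injective. A solution vanishing at `x₀` is `γ sinh (k (x - x₀))`, so a
solution of the homogeneous problem is `γ₁ sinh (k₁ x)` on the left and `γ₂ sinh (k₂ (x - 1))` on
the right. Then `[u] = 0` gives `γ₁ sinh (k₁/2) = -γ₂ sinh (k₂/2)` while `[u'] = 0` gives
`γ₁ k₁ cosh (k₁/2) = γ₂ k₂ cosh (k₂/2)`: `γ₁` and `γ₂` have both opposite and equal signs, so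
both vanish.
-/

open Filter Topology

/-- The piecewise exponential function with coefficients
`c = ((α₁, β₁), (α₂, β₂))`: it equals `α₁ e^{√b₁ x} + β₁ e^{-√b₁ x}` for `x < 1/2`
and `α₂ e^{√b₂ x} + β₂ e^{-√b₂ x}` for `x ≥ 1/2` (only the values on
`[0,1/2) ∪ (1/2,1]` matter). -/
noncomputable def piecewiseExp (b₁ b₂ : ℝ) (c : (ℝ × ℝ) × ℝ × ℝ) : ℝ → ℝ := fun x =>
  if x < 1 / 2 then
    c.1.1 * Real.exp (Real.sqrt b₁ * x) + c.1.2 * Real.exp (-Real.sqrt b₁ * x)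
  else
    c.2.1 * Real.exp (Real.sqrt b₂ * x) + c.2.2 * Real.exp (-Real.sqrt b₂ * x)

open Real Set

noncomputable def expPair (k : ℝ) (p : ℝ × ℝ) (x : ℝ) : ℝ :=
  p.1 * exp (k * x) + p.2 * exp (-k * x)

section expPair

variable (k : ℝ) (p : ℝ × ℝ)

theorem expPair_eq_add_inv (x : ℝ) :
    expPair k p x = p.1 * exp (k * x) + p.2 * (exp (k * x))⁻¹ := by
  rw [expPair, neg_mul, exp_neg]

theorem hasDerivAt_expPair (x : ℝ) :
    HasDerivAt (expPair k p) (expPair k (k * p.1, -(k * p.2)) x) x := by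
  have hexp (a : ℝ) : HasDerivAt (fun y ↦ exp (a * y)) (exp (a * x) * a) x := by
    simpa using ((hasDerivAt_id x).const_mul a).exp
  exact (((hexp k).const_mul p.1).add ((hexp (-k)).const_mul p.2)).congr_deriv
    (by simp only [expPair]; ring)

theorem deriv_expPair : deriv (expPair k p) = expPair k (k * p.1, -(k * p.2)) :=
  funext fun x ↦ (hasDerivAt_expPair k p x).deriv

theorem continuous_expPair : Continuous (expPair k p) := by
  unfold expPair
  fun_prop

theorem deriv_deriv_expPair (x : ℝ) : deriv (deriv (expPair k p)) x = k ^ 2 * expPair k p x := by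
  simp only [deriv_expPair, expPair]
  ring

variable {k p} {x₀ : ℝ}

theorem expPair_snd_of_eq_zero (h : expPair k p x₀ = 0) : p.2 = -(p.1 * exp (k * x₀) ^ 2) := by
  rw [expPair_eq_add_inv] at h
  field_simp at h
  linear_combination h

theorem expPair_eq_sinh_of_eq_zero (h : expPair k p x₀ = 0) (x : ℝ) :
    expPair k p x = 2 * (p.1 * exp (k * x₀)) * sinh (k * (x - x₀)) := by
  rw [expPair_eq_add_inv, expPair_snd_of_eq_zero h]
  simp only [sinh_eq, mul_sub, exp_sub, neg_sub]
  field_simp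
  ring

theorem deriv_expPair_eq_cosh_of_eq_zero (h : expPair k p x₀ = 0) (x : ℝ) :
    deriv (expPair k p) x = 2 * (p.1 * exp (k * x₀)) * k * cosh (k * (x - x₀)) := by
  rw [deriv_expPair, expPair_eq_add_inv, expPair_snd_of_eq_zero h]
  simp only [cosh_eq, mul_sub, exp_sub, neg_sub]
  field_simp

theorem eq_zero_of_expPair_eq_zero_of_fst_mul_exp_eq_zero (h : expPair k p x₀ = 0)
    (h₁ : p.1 * exp (k * x₀) = 0) : p = 0 := by
  have hp₁ : p.1 = 0 := by simpa [exp_ne_zero] using h₁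
  ext
  · exact hp₁
  · simp [expPair_snd_of_eq_zero h, hp₁]

end expPair

theorem eq_zero_of_mul_eq_neg_mul_of_mul_eq_mul {x y A B C D : ℝ} (hA : 0 < A) (hB : 0 < B)
    (hC : 0 < C) (hD : 0 < D) (h₁ : x * A = -(y * B)) (h₂ : x * C = y * D) : x = 0 ∧ y = 0 := by
  have hAC := mul_pos hA hC
  have hBD := mul_pos hB hD
  have hsum : x ^ 2 * (A * C) + y ^ 2 * (B * D) = 0 := by
    linear_combination (x * C) * h₁ - (y * B) * h₂
  obtain ⟨hx, hy⟩ := (add_eq_zero_iff_of_nonneg (by positivity) (by positivity)).1 hsum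
  exact ⟨by simpa [hAC.ne'] using hx, by simpa [hBD.ne'] using hy⟩

noncomputable def interfaceMap (k₁ k₂ : ℝ) : ((ℝ × ℝ) × ℝ × ℝ) →ₗ[ℝ] (ℝ × ℝ) × ℝ × ℝ where
  toFun c := ((expPair k₁ c.1 0, expPair k₂ c.2 1),
    expPair k₂ c.2 (1 / 2) - expPair k₁ c.1 (1 / 2),
    deriv (expPair k₂ c.2) (1 / 2) - deriv (expPair k₁ c.1) (1 / 2))
  map_add' c d := by
    simp only [deriv_expPair, expPair, Prod.fst_add, Prod.snd_add, Prod.mk_add_mk, Prod.mk.injEq]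
    refine ⟨⟨?_, ?_⟩, ?_, ?_⟩ <;> ring
  map_smul' r c := by
    simp only [deriv_expPair, expPair, Prod.smul_fst, Prod.smul_snd, Prod.smul_mk, smul_eq_mul,
      RingHom.id_apply, Prod.mk.injEq]
    refine ⟨⟨?_, ?_⟩, ?_, ?_⟩ <;> ring

theorem interfaceMap_injective {k₁ k₂ : ℝ} (hk₁ : 0 < k₁) (hk₂ : 0 < k₂) :
    Function.Injective (interfaceMap k₁ k₂) := by
  rw [← LinearMap.ker_eq_bot, LinearMap.ker_eq_bot']
  intro c hc
  simp only [interfaceMap, LinearMap.coe_mk, AddHom.coe_mk, Prod.mk_eq_zero, sub_eq_zero] at hc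
  obtain ⟨⟨h₀, h₁⟩, hD, hN⟩ := hc
  rw [expPair_eq_sinh_of_eq_zero h₀, expPair_eq_sinh_of_eq_zero h₁] at hD
  rw [deriv_expPair_eq_cosh_of_eq_zero h₀, deriv_expPair_eq_cosh_of_eq_zero h₁] at hN
  have hright (k : ℝ) : k * (1 / 2 - 1) = -(k / 2) := by ring
  have hleft (k : ℝ) : k * (1 / 2 - 0) = k / 2 := by ring
  rw [hright, hleft, sinh_neg] at hD
  rw [hright, hleft, cosh_neg] at hN
  obtain ⟨hγ₁, hγ₂⟩ := eq_zero_of_mul_eq_neg_mul_of_mul_eq_mul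
    (x := c.1.1 * exp (k₁ * 0)) (y := c.2.1 * exp (k₂ * 1))
    (sinh_pos_iff.2 (half_pos hk₁)) (sinh_pos_iff.2 (half_pos hk₂))
    (mul_pos hk₁ (cosh_pos (k₁ / 2))) (mul_pos hk₂ (cosh_pos (k₂ / 2)))
    (by linear_combination -hD / 2) (by linear_combination -hN / 2)
  exact Prod.ext (eq_zero_of_expPair_eq_zero_of_fst_mul_exp_eq_zero h₀ hγ₁)
    (eq_zero_of_expPair_eq_zero_of_fst_mul_exp_eq_zero h₁ hγ₂)

theorem exists_tendsto_sub_eq_iff {E : Type*} [TopologicalSpace E] [T2Space E] [Sub E]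
    {f : ℝ → E} {a : ℝ} {Lp Lm g : E}
    (hp : Tendsto f (𝓝[>] a) (𝓝 Lp)) (hm : Tendsto f (𝓝[<] a) (𝓝 Lm)) :
    (∃ Lp' Lm' : E, Tendsto f (𝓝[>] a) (𝓝 Lp') ∧ Tendsto f (𝓝[<] a) (𝓝 Lm') ∧ Lp' - Lm' = g) ↔
      Lp - Lm = g := by
  refine ⟨?_, fun h ↦ ⟨Lp, Lm, hp, hm, h⟩⟩
  rintro ⟨Lp', Lm', hp', hm', rfl⟩
  rw [tendsto_nhds_unique hp hp', tendsto_nhds_unique hm hm']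

section piecewiseExp

variable (b₁ b₂ : ℝ) (c : (ℝ × ℝ) × ℝ × ℝ)

theorem eqOn_piecewiseExp_left : EqOn (piecewiseExp b₁ b₂ c) (expPair √b₁ c.1) (Iio (1 / 2)) :=
  fun _ hx ↦ if_pos hx

theorem eqOn_piecewiseExp_right : EqOn (piecewiseExp b₁ b₂ c) (expPair √b₂ c.2) (Ici (1 / 2)) :=
  fun _ hx ↦ if_neg (not_lt.2 hx)

theorem eqOn_deriv_piecewiseExp_left :
    EqOn (deriv (piecewiseExp b₁ b₂ c)) (deriv (expPair √b₁ c.1)) (Iio (1 / 2)) :=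
  (eqOn_piecewiseExp_left b₁ b₂ c).deriv isOpen_Iio

theorem eqOn_deriv_piecewiseExp_right :
    EqOn (deriv (piecewiseExp b₁ b₂ c)) (deriv (expPair √b₂ c.2)) (Ioi (1 / 2)) :=
  ((eqOn_piecewiseExp_right b₁ b₂ c).mono Ioi_subset_Ici_self).deriv isOpen_Ioi

theorem tendsto_piecewiseExp_left :
    Tendsto (piecewiseExp b₁ b₂ c) (𝓝[<] (1 / 2)) (𝓝 (expPair √b₁ c.1 (1 / 2))) :=
  tendsto_nhdsWithin_congr (fun _ hx ↦ (eqOn_piecewiseExp_left b₁ b₂ c hx).symm)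
    (continuous_expPair _ _).continuousWithinAt

theorem tendsto_piecewiseExp_right :
    Tendsto (piecewiseExp b₁ b₂ c) (𝓝[>] (1 / 2)) (𝓝 (expPair √b₂ c.2 (1 / 2))) :=
  tendsto_nhdsWithin_congr
    (fun _ hx ↦ (eqOn_piecewiseExp_right b₁ b₂ c (Ioi_subset_Ici_self hx)).symm)
    (continuous_expPair _ _).continuousWithinAt

theorem tendsto_deriv_piecewiseExp_left :
    Tendsto (deriv (piecewiseExp b₁ b₂ c)) (𝓝[<] (1 / 2)) (𝓝 (deriv (expPair √b₁ c.1) (1 / 2))) :=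
  tendsto_nhdsWithin_congr (fun _ hx ↦ (eqOn_deriv_piecewiseExp_left b₁ b₂ c hx).symm)
    (by rw [deriv_expPair]; exact (continuous_expPair _ _).continuousWithinAt)

theorem tendsto_deriv_piecewiseExp_right :
    Tendsto (deriv (piecewiseExp b₁ b₂ c)) (𝓝[>] (1 / 2)) (𝓝 (deriv (expPair √b₂ c.2) (1 / 2))) :=
  tendsto_nhdsWithin_congr (fun _ hx ↦ (eqOn_deriv_piecewiseExp_right b₁ b₂ c hx).symm)
    (by rw [deriv_expPair]; exact (continuous_expPair _ _).continuousWithinAt)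

variable {b₁ b₂}

theorem piecewiseExp_ode_left (hb₁ : 0 ≤ b₁) {x : ℝ} (hx : x < 1 / 2) :
    -deriv (deriv (piecewiseExp b₁ b₂ c)) x + b₁ * piecewiseExp b₁ b₂ c x = 0 := by
  rw [(eqOn_deriv_piecewiseExp_left b₁ b₂ c).deriv isOpen_Iio hx, deriv_deriv_expPair,
    sq_sqrt hb₁, eqOn_piecewiseExp_left b₁ b₂ c hx]
  ring

theorem piecewiseExp_ode_right (hb₂ : 0 ≤ b₂) {x : ℝ} (hx : 1 / 2 < x) :
    -deriv (deriv (piecewiseExp b₁ b₂ c)) x + b₂ * piecewiseExp b₁ b₂ c x = 0 := by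
  rw [(eqOn_deriv_piecewiseExp_right b₁ b₂ c).deriv isOpen_Ioi hx, deriv_deriv_expPair,
    sq_sqrt hb₂, eqOn_piecewiseExp_right b₁ b₂ c (le_of_lt hx)]
  ring

end piecewiseExp

def IsInterfaceSolution (b₁ b₂ gD gN : ℝ) (c : (ℝ × ℝ) × ℝ × ℝ) : Prop :=
  piecewiseExp b₁ b₂ c 0 = 0 ∧
  piecewiseExp b₁ b₂ c 1 = 0 ∧
  (∃ Lp Lm : ℝ,
    Tendsto (piecewiseExp b₁ b₂ c) (𝓝[>] (1 / 2)) (𝓝 Lp) ∧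
    Tendsto (piecewiseExp b₁ b₂ c) (𝓝[<] (1 / 2)) (𝓝 Lm) ∧
    Lp - Lm = gD) ∧
  (∃ Mp Mm : ℝ,
    Tendsto (deriv (piecewiseExp b₁ b₂ c)) (𝓝[>] (1 / 2)) (𝓝 Mp) ∧
    Tendsto (deriv (piecewiseExp b₁ b₂ c)) (𝓝[<] (1 / 2)) (𝓝 Mm) ∧
    Mp - Mm = gN) ∧
  (∀ x ∈ Ioo (0 : ℝ) (1 / 2),
    -(deriv (deriv (piecewiseExp b₁ b₂ c)) x) + b₁ * piecewiseExp b₁ b₂ c x = 0) ∧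
  (∀ x ∈ Ioo (1 / 2 : ℝ) 1,
    -(deriv (deriv (piecewiseExp b₁ b₂ c)) x) + b₂ * piecewiseExp b₁ b₂ c x = 0)

theorem isInterfaceSolution_iff {b₁ b₂ : ℝ} (hb₁ : 0 ≤ b₁) (hb₂ : 0 ≤ b₂) (gD gN : ℝ)
    (c : (ℝ × ℝ) × ℝ × ℝ) :
    IsInterfaceSolution b₁ b₂ gD gN c ↔ interfaceMap √b₁ √b₂ c = ((0, 0), gD, gN) := by
  have hode₁ := fun x (hx : x ∈ Ioo (0 : ℝ) (1 / 2)) ↦ piecewiseExp_ode_left (b₂ := b₂) c hb₁ hx.2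
  have hode₂ := fun x (hx : x ∈ Ioo (1 / 2 : ℝ) 1) ↦ piecewiseExp_ode_right (b₁ := b₁) c hb₂ hx.1
  rw [IsInterfaceSolution, exists_tendsto_sub_eq_iff (tendsto_piecewiseExp_right b₁ b₂ c)
      (tendsto_piecewiseExp_left b₁ b₂ c),
    exists_tendsto_sub_eq_iff (tendsto_deriv_piecewiseExp_right b₁ b₂ c)
      (tendsto_deriv_piecewiseExp_left b₁ b₂ c),
    eqOn_piecewiseExp_left b₁ b₂ c (show (0 : ℝ) < 1 / 2 by norm_num),
    eqOn_piecewiseExp_right b₁ b₂ c (show (1 / 2 : ℝ) ≤ 1 by norm_num)]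
  simp only [iff_true_intro hode₁, iff_true_intro hode₂, interfaceMap, LinearMap.coe_mk,
    AddHom.coe_mk, Prod.mk.injEq, and_true, and_assoc]

/-- For `b₁, b₂ > 0` and jump data `g_D, g_N`, there are unique constants
`α₁, β₁, α₂, β₂` such that the piecewise exponential function `u` satisfies the
homogeneous boundary conditions `u(0) = u(1) = 0`, the interface jump conditions
`[u] = g_D` and `[u'] = g_N` at `x = 1/2` (right limit minus left limit), and hence `u`
is the unique piecewise solution of `-u'' + bᵢ u = 0` on each subinterval with these
interface and boundary conditions. -/
theorem unique_piecewise_exp_interface_solution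
    (b₁ b₂ : ℝ) (hb₁ : 0 < b₁) (hb₂ : 0 < b₂) (gD gN : ℝ) :
    ∃! c : (ℝ × ℝ) × ℝ × ℝ,
      piecewiseExp b₁ b₂ c 0 = 0 ∧
      piecewiseExp b₁ b₂ c 1 = 0 ∧
      (∃ Lp Lm : ℝ,
        Tendsto (piecewiseExp b₁ b₂ c) (𝓝[>] (1 / 2)) (𝓝 Lp) ∧
        Tendsto (piecewiseExp b₁ b₂ c) (𝓝[<] (1 / 2)) (𝓝 Lm) ∧
        Lp - Lm = gD) ∧
      (∃ Mp Mm : ℝ,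
        Tendsto (deriv (piecewiseExp b₁ b₂ c)) (𝓝[>] (1 / 2)) (𝓝 Mp) ∧
        Tendsto (deriv (piecewiseExp b₁ b₂ c)) (𝓝[<] (1 / 2)) (𝓝 Mm) ∧
        Mp - Mm = gN) ∧
      (∀ x ∈ Set.Ioo (0 : ℝ) (1 / 2),
        -(deriv (deriv (piecewiseExp b₁ b₂ c)) x) + b₁ * piecewiseExp b₁ b₂ c x = 0) ∧
      (∀ x ∈ Set.Ioo (1 / 2 : ℝ) 1,
        -(deriv (deriv (piecewiseExp b₁ b₂ c)) x) + b₂ * piecewiseExp b₁ b₂ c x = 0) := by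
  have hinj := interfaceMap_injective (sqrt_pos.2 hb₁) (sqrt_pos.2 hb₂)
  have hbij : Function.Bijective (interfaceMap √b₁ √b₂) :=
    ⟨hinj, LinearMap.injective_iff_surjective.1 hinj⟩
  show ∃! c, IsInterfaceSolution b₁ b₂ gD gN c
  simpa only [isInterfaceSolution_iff hb₁.le hb₂.le] using hbij.existsUnique ((0, 0), gD, gN)
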